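/- arXiv:2302.00301 — 3 statements merged into one kernel-verified Lean document; each statement's English description precedes it below -/
import Mathlib

section
/- Let ρ > 1, σ̂² > 0, k > 0 with ρσ̂² ≥ k + σ̂²/ρ. Define P_ew(τ) = P_FA(τ) + P_MD(τ) under the log-uniform noise uncertainty model. Then P_ew attains its minimum over all τ ≥ 0 at τ* = k + σ̂²/ρ, and the minimum value is P_ew* = 1 − (ln(ρk + σ̂²) − ln(σ̂²))/(2 ln ρ). -/
open MeasureTheory Real Set

lemma aux_int (c p q : ℝ) (hc : 0 < c) (hp : 0 < p) (hpq : p ≤ q) :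
    ∫ x in Set.Ioc p q, 1/(c*x) = (Real.log q - Real.log p)/c := by
  have hq : 0 < q := lt_of_lt_of_le hp hpq
  rw [← intervalIntegral.integral_of_le hpq]
  have h1 : ∀ x : ℝ, 1/(c*x) = c⁻¹ * (1/x) := by
    intro x
    rw [one_div, mul_inv, one_div]
  simp_rw [h1]
  rw [intervalIntegral.integral_const_mul,
    integral_one_div (Set.notMem_uIcc_of_lt hp hq),
    Real.log_div hq.ne' hp.ne']
  field_simp


/-- Case II of Lemma 1: the minimum DEP is attained at τ* = k + σ̂²/ρ and equals
1 - (ln(ρk + σ̂²) - ln σ̂²)/(2 ln ρ). -/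
theorem minimum_dep_caseII
    (ρ σ2 k : ℝ) (hρ : 1 < ρ) (hσ : 0 < σ2) (hk : 0 < k)
    (hcase : k + σ2 / ρ ≤ ρ * σ2)
    (f : ℝ → ℝ)
    (hf : f = fun x => if σ2 / ρ ≤ x ∧ x ≤ ρ * σ2 then 1 / (2 * Real.log ρ * x) else 0)
    (Pew : ℝ → ℝ)
    (hPew : Pew = fun τ => (∫ x in Set.Ioi τ, f x) + ∫ x in Set.Iio (τ - k), f x) :
    (∀ τ : ℝ, 0 ≤ τ → Pew (k + σ2 / ρ) ≤ Pew τ) ∧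
    Pew (k + σ2 / ρ) = 1 - (Real.log (ρ * k + σ2) - Real.log σ2) / (2 * Real.log ρ) := by
  have hρ0 : (0:ℝ) < ρ := lt_trans one_pos hρ
  set L : ℝ := σ2 / ρ with hLdef
  set U : ℝ := ρ * σ2 with hUdef
  set c : ℝ := 2 * Real.log ρ with hcdef
  have hlogρ : 0 < Real.log ρ := Real.log_pos hρ
  have hc : 0 < c := by positivity
  have hL : 0 < L := by positivity
  have hU : 0 < U := by positivity
  have hLU : L ≤ U := by
    rw [hLdef, hUdef, div_le_iff₀ hρ0]
    nlinarith
  set g : ℝ → ℝ := fun x => 1/(c*x) with hgdef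
  -- closed form for the upper-tail integral
  have hIoi : ∀ a : ℝ, ∫ x in Set.Ioi a, f x
      = (Real.log U - Real.log (min U (max a L)))/c := by
    intro a
    have hae : f =ᵐ[volume] (Set.Ioc L U).indicator g := by
      rw [Filter.EventuallyEq, ae_iff]
      refine measure_mono_null (fun x hx => ?_) (measure_singleton L)
      simp only [Set.mem_setOf_eq] at hx
      by_contra hxL
      apply hx
      rw [hf, hgdef]
      simp only [Set.indicator, Set.mem_Ioc]
      by_cases h1 : L < x ∧ x ≤ U
      · simp [h1, h1.1.le, h1.2]
      · have h2 : ¬ (L ≤ x ∧ x ≤ U) := fun h2 =>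
          h1 ⟨lt_of_le_of_ne h2.1 (fun h => hxL (Set.mem_singleton_iff.mpr h.symm)), h2.2⟩
        simp [h1, h2]
    rw [integral_congr_ae (ae_restrict_of_ae hae),
      setIntegral_indicator measurableSet_Ioc]
    have hset : Set.Ioi a ∩ Set.Ioc L U = Set.Ioc (max a L) U := by
      ext x
      simp only [Set.mem_inter_iff, Set.mem_Ioi, Set.mem_Ioc, max_lt_iff]
      tauto
    rw [hset]
    by_cases hle : max a L ≤ U
    · rw [hgdef] at *
      rw [aux_int c _ U hc (lt_of_lt_of_le hL (le_max_right a L)) hle,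
        min_eq_right hle]
    · push_neg at hle
      rw [Set.Ioc_eq_empty (not_lt.mpr hle.le), min_eq_left hle.le]
      simp
  -- closed form for the lower-tail integral
  have hIio : ∀ a : ℝ, ∫ x in Set.Iio a, f x
      = (Real.log (min U (max a L)) - Real.log L)/c := by
    intro a
    have hae : f =ᵐ[volume] (Set.Ioo L U).indicator g := by
      rw [Filter.EventuallyEq, ae_iff]
      refine measure_mono_null (fun x hx => ?_) (measure_union_null
        (measure_singleton L) (measure_singleton U))
      simp only [Set.mem_setOf_eq] at hx
      by_contra hxLU
      simp only [Set.mem_union, Set.mem_singleton_iff, not_or] at hxLU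
      apply hx
      rw [hf, hgdef]
      simp only [Set.indicator, Set.mem_Ioo]
      by_cases h1 : L < x ∧ x < U
      · simp [h1, h1.1.le, h1.2.le]
      · have h2 : ¬ (L ≤ x ∧ x ≤ U) := fun h2 =>
          h1 ⟨lt_of_le_of_ne h2.1 (fun h => hxLU.1 h.symm),
            lt_of_le_of_ne h2.2 hxLU.2⟩
        simp [h1, h2]
    rw [integral_congr_ae (ae_restrict_of_ae hae),
      setIntegral_indicator measurableSet_Ioo]
    have hset : Set.Iio a ∩ Set.Ioo L U = Set.Ioo L (min a U) := by
      ext x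
      simp only [Set.mem_inter_iff, Set.mem_Iio, Set.mem_Ioo, lt_min_iff]
      tauto
    rw [hset, ← integral_Ioc_eq_integral_Ioo]
    by_cases hle : L ≤ min a U
    · have hLa : L ≤ a := le_trans hle (min_le_left a U)
      rw [hgdef] at *
      rw [aux_int c L _ hc hL hle, max_eq_left hLa, min_comm]
    · push_neg at hle
      have haL : a ≤ L := by
        by_contra hcon
        push_neg at hcon
        exact absurd (le_min hcon.le hLU) (not_le.mpr hle)
      rw [Set.Ioc_eq_empty (not_lt.mpr hle.le), max_eq_right haL,
        min_eq_right hLU]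
      simp
  -- the combined formula
  have key : ∀ a : ℝ, Pew a
      = 1 - (Real.log (min U (max a L)) - Real.log (min U (max (a-k) L)))/c := by
    intro a
    have hUL : Real.log U - Real.log L = c := by
      rw [hUdef, hLdef, Real.log_mul hρ0.ne' hσ.ne', Real.log_div hσ.ne' hρ0.ne',
        hcdef]
      ring
    rw [hPew]
    simp only
    rw [hIoi a, hIio (a-k)]
    field_simp
    linarith [hUL]
  -- bounds on the clamp
  have hclamp_pos : ∀ t : ℝ, 0 < min U (max t L) := fun t =>
    lt_min hU (lt_of_lt_of_le hL (le_max_right t L))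
  have hclamp_ge : ∀ t : ℝ, L ≤ min U (max t L) := fun t =>
    le_min hLU (le_max_right t L)
  -- value at the optimum
  have hτs1 : min U (max (k + L) L) = k + L := by
    rw [max_eq_left (by linarith), min_eq_right hcase]
  have hτs2 : min U (max ((k + L) - k) L) = L := by
    have : (k + L) - k = L := by ring
    rw [this, max_self, min_eq_right hLU]
  have hval : Pew (k + L) = 1 - (Real.log (k + L) - Real.log L)/c := by
    rw [key, hτs1, hτs2]
  constructor
  · intro τ _
    rw [hval, key τ]
    have hkey : L * min U (max τ L) ≤ (k + L) * min U (max (τ-k) L) := by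
      rcases le_total τ (k + L) with h1 | h1
      · have h2 : min U (max τ L) ≤ k + L :=
          le_trans (min_le_right _ _) (max_le h1 (by linarith))
        nlinarith [hclamp_ge (τ - k), hclamp_pos (τ - k)]
      · rcases le_total (τ - k) U with h2 | h2
        · have h3 : min U (max (τ-k) L) = τ - k := by
            rw [max_eq_left (by linarith), min_eq_right h2]
          have h4 : min U (max τ L) ≤ τ :=
            le_trans (min_le_right _ _) (max_le le_rfl (by linarith))
          rw [h3]
          nlinarith [hclamp_pos τ]
        · have h3 : min U (max (τ-k) L) = U := by
            rw [max_eq_left (le_trans hLU h2), min_eq_left h2]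
          rw [h3]
          nlinarith [min_le_left U (max τ L)]
    have hlog : Real.log (min U (max τ L)) - Real.log (min U (max (τ-k) L))
        ≤ Real.log (k + L) - Real.log L := by
      have := Real.log_le_log (by positivity : (0:ℝ) < L * min U (max τ L)) hkey
      rw [Real.log_mul hL.ne' (hclamp_pos τ).ne',
        Real.log_mul (by positivity : (k+L) ≠ 0) (hclamp_pos (τ-k)).ne'] at this
      linarith
    have : (Real.log (min U (max τ L)) - Real.log (min U (max (τ-k) L)))/c
        ≤ (Real.log (k + L) - Real.log L)/c := by gcongr
    linarith
  · rw [hval]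
    have h1 : k + L = (ρ * k + σ2)/ρ := by
      rw [hLdef]; field_simp
    have h2 : Real.log (k + L) = Real.log (ρ * k + σ2) - Real.log ρ := by
      rw [h1, Real.log_div (by positivity) hρ0.ne']
    have h3 : Real.log L = Real.log σ2 - Real.log ρ := by
      rw [hLdef, Real.log_div hσ.ne' hρ0.ne']
    rw [h2, h3, hcdef]
    ring_nf
end

section
/- Let ρ > 1, σ̂² > 0, c > 0, and ν > 0. If σ² is log-uniform on [σ̂²/ρ, ρσ̂²] with density 1/(2 ln(ρ)x), then E[exp(−c (σ²)^{ν/2})] = (1/(ν ln ρ)) [Ei(−c (ρσ̂²)^{ν/2}) − Ei(−c (σ̂²/ρ)^{ν/2})], where Ei is the exponential integral. -/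
open Real MeasureTheory intervalIntegral

/-- The exponential integral Ei(z) = -∫_{-z}^∞ e^{-t}/t dt (for z < 0). -/
noncomputable def Ei (z : ℝ) : ℝ :=
  -∫ t in Set.Ioi (-z), Real.exp (-t) / t

lemma integrableOn_exp_div (a : ℝ) (ha : 0 < a) :
    IntegrableOn (fun t => Real.exp (-t) / t) (Set.Ioi a) := by
  have hmeas : AEStronglyMeasurable (fun t => Real.exp (-t) / t)
      (volume.restrict (Set.Ioi a)) := by
    apply ContinuousOn.aestronglyMeasurable _ measurableSet_Ioi
    exact ContinuousOn.div (Real.continuous_exp.comp continuous_neg).continuousOn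
      continuousOn_id (fun x hx => (ha.trans hx).ne')
  refine Integrable.mono' (((exp_neg_integrableOn_Ioi a one_pos).const_mul (1/a))) hmeas ?_
  filter_upwards [ae_restrict_mem measurableSet_Ioi] with t ht
  have ht' : a < t := ht
  have ht0 : 0 < t := ha.trans ht'
  rw [Real.norm_eq_abs, abs_of_nonneg (by positivity)]
  have h1 : Real.exp (-t) / t ≤ Real.exp (-t) / a := by
    apply div_le_div_of_nonneg_left (Real.exp_pos _).le ha ht'.le
  calc Real.exp (-t) / t ≤ Real.exp (-t) / a := h1
    _ = 1 / a * Real.exp (-1 * t) := by rw [neg_one_mul]; ring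

lemma intervalIntegral_eq_Ei_sub {a b : ℝ} (ha : 0 < a) (hab : a ≤ b) :
    ∫ t in a..b, Real.exp (-t) / t = Ei (-b) - Ei (-a) := by
  have hb : 0 < b := ha.trans_le hab
  have h1 : IntegrableOn (fun t => Real.exp (-t) / t) (Set.Ioi a) :=
    integrableOn_exp_div a ha
  have h2 : IntegrableOn (fun t => Real.exp (-t) / t) (Set.Ioi b) :=
    integrableOn_exp_div b hb
  have hu : Set.Ioc a b ∪ Set.Ioi b = Set.Ioi a := Set.Ioc_union_Ioi_eq_Ioi hab
  have hsplit : ∫ t in Set.Ioi a, Real.exp (-t) / t =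
      (∫ t in Set.Ioc a b, Real.exp (-t) / t) + ∫ t in Set.Ioi b, Real.exp (-t) / t := by
    rw [← hu, setIntegral_union (Set.Ioc_disjoint_Ioi le_rfl) measurableSet_Ioi
      (h1.mono_set (hu ▸ Set.subset_union_left)) h2]
  rw [intervalIntegral.integral_of_le hab, Ei, Ei, neg_neg, neg_neg]
  rw [hsplit]
  ring

/-- Averaging the Rician non-outage term over log-uniform noise (Theorem 2). -/
theorem avg_exp_rpow_logUniform
    (ρ σ2 c ν : ℝ) (hρ : 1 < ρ) (hσ : 0 < σ2) (hc : 0 < c) (hν : 0 < ν) :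
    ∫ x in (σ2 / ρ)..(ρ * σ2),
        Real.exp (-c * x ^ (ν / 2)) * (1 / (2 * Real.log ρ * x)) =
      (1 / (ν * Real.log ρ)) *
        (Ei (-c * (ρ * σ2) ^ (ν / 2)) - Ei (-c * (σ2 / ρ) ^ (ν / 2))) := by
  have hρ0 : (0:ℝ) < ρ := zero_lt_one.trans hρ
  set A := σ2 / ρ with hA
  set B := ρ * σ2 with hB
  have hA0 : 0 < A := div_pos hσ hρ0
  have hAB : A ≤ B :=
    (div_le_self hσ.le hρ.le).trans (le_mul_of_one_le_left hσ.le hρ.le)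
  have hlog : 0 < Real.log ρ := Real.log_pos hρ
  set f : ℝ → ℝ := fun x => c * x ^ (ν / 2) with hf
  set f' : ℝ → ℝ := fun x => c * ((ν / 2) * x ^ (ν / 2 - 1)) with hf'
  set g : ℝ → ℝ := fun t => Real.exp (-t) / t with hg
  have huIcc : Set.uIcc A B = Set.Icc A B := Set.uIcc_of_le hAB
  have hpos : ∀ x ∈ Set.uIcc A B, 0 < x := by
    intro x hx
    rw [huIcc] at hx
    exact hA0.trans_le hx.1
  have hcong : ∀ x ∈ Set.uIcc A B,
      Real.exp (-c * x ^ (ν / 2)) * (1 / (2 * Real.log ρ * x)) =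
      (1 / (ν * Real.log ρ)) * (f' x • g (f x)) := by
    intro x hx
    have hx0 : 0 < x := hpos x hx
    have hxr : 0 < x ^ (ν / 2) := Real.rpow_pos_of_pos hx0 _
    have hkey : x ^ (ν / 2 - 1) = x ^ (ν / 2) / x := by
      rw [Real.rpow_sub hx0, Real.rpow_one]
    have hx' : x ≠ 0 := hx0.ne'
    have hxr' : x ^ (ν / 2) ≠ 0 := hxr.ne'
    have hlog' : Real.log ρ ≠ 0 := hlog.ne'
    have hν' : ν ≠ 0 := hν.ne'
    have hc' : c ≠ 0 := hc.ne'
    simp only [hf, hf', hg, smul_eq_mul]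
    rw [hkey]
    field_simp
  rw [intervalIntegral.integral_congr hcong, intervalIntegral.integral_const_mul]
  have hderiv : ∀ x ∈ Set.Ioo (min A B) (max A B), HasDerivWithinAt f (f' x) (Set.Ioi x) x := by
    intro x hx
    have hx0 : 0 < x := by
      have := hx.1
      rw [min_eq_left hAB] at this
      exact hA0.trans this
    have : HasDerivAt (fun y : ℝ => y ^ (ν / 2)) ((ν / 2) * x ^ (ν / 2 - 1)) x :=
      Real.hasDerivAt_rpow_const (Or.inl hx0.ne')
    exact ((this.const_mul c).hasDerivWithinAt)
  have hfc : ContinuousOn f (Set.uIcc A B) := by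
    apply ContinuousOn.mul continuousOn_const
    intro x hx
    exact (Real.continuousAt_rpow_const x _ (Or.inl (hpos x hx).ne')).continuousWithinAt
  have hf'c : ContinuousOn f' (Set.uIcc A B) := by
    apply ContinuousOn.mul continuousOn_const
    apply ContinuousOn.mul continuousOn_const
    intro x hx
    exact (Real.continuousAt_rpow_const x _ (Or.inl (hpos x hx).ne')).continuousWithinAt
  have hgc : ContinuousOn g (f '' Set.uIcc A B) := by
    apply ContinuousOn.div (Real.continuous_exp.comp continuous_neg).continuousOn continuousOn_id
    rintro t ⟨x, hx, rfl⟩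
    have h := Real.rpow_pos_of_pos (hpos x hx) (ν / 2)
    exact (mul_pos hc h).ne'
  have hsub := intervalIntegral.integral_comp_smul_deriv'' hfc hderiv hf'c hgc
  simp only [Function.comp] at hsub
  rw [hsub]
  have hfA : 0 < f A := by
    have := Real.rpow_pos_of_pos hA0 (ν / 2); simp only [hf]; positivity
  have hfAB : f A ≤ f B := by
    simp only [hf]
    have : A ^ (ν / 2) ≤ B ^ (ν / 2) :=
      Real.rpow_le_rpow hA0.le hAB (by positivity)
    nlinarith
  rw [intervalIntegral_eq_Ei_sub hfA hfAB]
  simp only [hf]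
  ring_nf
end

section
/- Let ρ > 1, σ̂² > 0, P > 0, L > 0, and h ≥ 0. If σ² is log-uniform on [σ̂²/ρ, ρσ̂²] with density 1/(2 ln(ρ)x), then E[ln(1 + P L h/σ²)] = (1/(2 ln ρ)) [Li₂(−P L h/(ρσ̂²)) − Li₂(−ρ P L h/σ̂²)], where Li₂ is the dilogarithm. -/
/-!
Substituting `t = -c/x` shows that `x ↦ Li₂(-c/x)` is an antiderivative of `log (1 + c/x) / x`
on `x > 0` whenever `c ≥ 0`, so the expectation is a difference of two values of `Li₂` by the
fundamental theorem of calculus.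
-/

open Real intervalIntegral

/-- The dilogarithm Li₂(z) = -∫₀^z ln(1-t)/t dt. -/
noncomputable def Li2 (z : ℝ) : ℝ :=
  -∫ t in (0:ℝ)..z, Real.log (1 - t) / t

open Set

lemma dslope_log_one_sub_of_ne {t : ℝ} (ht : t ≠ 0) :
    dslope (fun t => log (1 - t)) 0 t = log (1 - t) / t := by
  rw [dslope_of_ne _ ht, slope_def_field]
  simp

lemma continuousOn_dslope_log_one_sub :
    ContinuousOn (dslope (fun t => log (1 - t)) 0) (Iio 1) := by
  refine (continuousOn_dslope (Iio_mem_nhds one_pos)).2 ⟨?_, ?_⟩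
  · exact (continuousOn_const.sub continuousOn_id).log fun t ht => (sub_pos.2 ht).ne'
  · exact ((differentiableAt_id.const_sub 1).log (by norm_num))

/-- The integrand of `Li2` agrees off `0` with the difference quotient of `log (1 - t)` at `0`,
which is continuous on `(-∞, 1)`. -/
lemma Li2_eq_neg_integral_dslope :
    Li2 = fun z => -∫ t in (0 : ℝ)..z, dslope (fun t => log (1 - t)) 0 t := by
  ext z
  rw [Li2, integral_congr_ae]
  filter_upwards [MeasureTheory.volume.ae_ne 0] with t ht _
  rw [dslope_log_one_sub_of_ne ht]

lemma hasDerivAt_Li2 {z : ℝ} (hz : z < 1) :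
    HasDerivAt Li2 (-dslope (fun t => log (1 - t)) 0 z) z := by
  have hcont := continuousOn_dslope_log_one_sub
  rw [Li2_eq_neg_integral_dslope]
  refine (integral_hasDerivAt_right ?_ (hcont.stronglyMeasurableAtFilter isOpen_Iio _ hz)
    (hcont.continuousAt (Iio_mem_nhds hz))).neg
  exact (hcont.mono (ordConnected_Iio.uIcc_subset one_pos hz)).intervalIntegrable

lemma hasDerivAt_Li2_neg_div {c x : ℝ} (hx : x ≠ 0) (hcx : -c / x < 1) :
    HasDerivAt (fun y => Li2 (-c / y)) (log (1 + c / x) / x) x := by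
  have hinner : HasDerivAt (fun y => -c / y) (c / x ^ 2) x := by
    simpa [div_eq_mul_inv] using (hasDerivAt_inv hx).const_mul (-c)
  refine ((hasDerivAt_Li2 hcx).comp x hinner).congr_deriv ?_
  rcases eq_or_ne c 0 with rfl | hc
  · simp
  rw [dslope_log_one_sub_of_ne (by simp [hc, hx]), neg_div, sub_neg_eq_add]
  field_simp

lemma integral_log_one_add_div_div_eq_Li2_sub {a b c : ℝ} (ha : 0 < a) (hb : 0 < b)
    (hc : 0 ≤ c) :
    ∫ x in a..b, log (1 + c / x) / x = Li2 (-c / b) - Li2 (-c / a) := by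
  have hpos : ∀ x ∈ uIcc a b, 0 < x := fun x hx => (lt_min ha hb).trans_le hx.1
  refine integral_eq_sub_of_hasDerivAt (fun x hx => hasDerivAt_Li2_neg_div (hpos x hx).ne' ?_)
    (ContinuousOn.intervalIntegrable ?_)
  · exact (div_nonpos_of_nonpos_of_nonneg (neg_nonpos.2 hc) (hpos x hx).le).trans_lt one_pos
  · have hx0 : ∀ x ∈ uIcc a b, x ≠ 0 := fun x hx => (hpos x hx).ne'
    have hlog : ∀ x ∈ uIcc a b, 1 + c / x ≠ 0 := fun x hx => by
      have := hpos x hx; positivity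
    fun_prop (disch := assumption)

/-- The ergodic capacity averaged over log-uniform noise uncertainty
(inner expectation in Theorems 3 and 6). -/
theorem avg_log_snr_logUniform
    (ρ σ2 P L h : ℝ) (hρ : 1 < ρ) (hσ : 0 < σ2) (hP : 0 < P) (hL : 0 < L)
    (hh : 0 ≤ h) :
    ∫ x in (σ2 / ρ)..(ρ * σ2),
        Real.log (1 + P * L * h / x) * (1 / (2 * Real.log ρ * x)) =
      (1 / (2 * Real.log ρ)) *
        (Li2 (-(P * L * h) / (ρ * σ2)) - Li2 (-(ρ * P * L * h) / σ2)) := by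
  have hρ0 : 0 < ρ := one_pos.trans hρ
  have hσρ : -(P * L * h) / (σ2 / ρ) = -(ρ * P * L * h) / σ2 := by
    field_simp
  simp_rw [show ∀ x, log (1 + P * L * h / x) * (1 / (2 * log ρ * x)) =
      1 / (2 * log ρ) * (log (1 + P * L * h / x) / x) by intro x; ring]
  rw [integral_const_mul, integral_log_one_add_div_div_eq_Li2_sub (div_pos hσ hρ0)
    (mul_pos hρ0 hσ) (by positivity), hσρ]
end
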